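/- arXiv:2010.15819 — 4 statements merged into one kernel-verified Lean document; each statement's English description precedes it below -/
import Mathlib

section
/- Let A₁, Â₁ ∈ ℝ^{I₁×r₁} and A₂, Â₂ ∈ ℝ^{I₂×r₂} all have orthonormal columns. Let M = A₁ ⊗ A₂ and M̂ = Â₁ ⊗ Â₂ (Kronecker products). Then ‖sin Θ(M, M̂)‖ ≤ √2 · max{‖sin Θ(A₁, Â₁)‖, ‖sin Θ(A₂, Â₂)‖}. -/
open Matrix Kronecker

/-- Smallest singular value of a real matrix. -/
noncomputable def sMin {m n : Type*} [Fintype m] [Fintype n] [DecidableEq n]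
    (A : Matrix m n ℝ) : ℝ :=
  Real.sqrt (⨅ i, (show (Aᵀ * A).IsHermitian by
    simpa [Matrix.conjTranspose_eq_transpose_of_trivial] using
      Matrix.isHermitian_conjTranspose_mul_self A).eigenvalues i)

/-- Sine of the largest canonical angle between the column spaces of two matrices
with orthonormal columns: `‖sin Θ(X,Y)‖ = √(1 − σ_min(XᵀY)²)`. -/
noncomputable def sinTheta {m n : Type*} [Fintype m] [Fintype n] [DecidableEq n]
    (X Y : Matrix m n ℝ) : ℝ :=
  Real.sqrt (1 - sMin (Xᵀ * Y) ^ 2)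

/-!
Put `Bₖ = Aₖᵀ Âₖ`. The cross matrix of the Kronecker products is `B₁ ⊗ B₂`, with Gram matrix
`B₁ᵀB₁ ⊗ B₂ᵀB₂`. If `Gₖ - cₖ I ⪰ 0` and `G₂ ⪰ 0`, `c₁ ≥ 0`, then
`G₁ ⊗ G₂ - c₁c₂ I = (G₁ - c₁ I) ⊗ G₂ + c₁ (I ⊗ (G₂ - c₂ I)) ⪰ 0`, so
`σ_min(B₁ ⊗ B₂) ≥ σ_min(B₁) σ_min(B₂)`. Orthonormality gives
`I - BₖᵀBₖ = (Âₖ - AₖBₖ)ᵀ(Âₖ - AₖBₖ) ⪰ 0`, hence `σ_min(Bₖ) ≤ 1`, and for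
`s₁, s₂ ∈ [0, 1]` one has `1 - s₁²s₂² = (1 - s₁²) + s₁²(1 - s₂²) ≤ 2 max(1 - s₁², 1 - s₂²)`.
-/

open scoped ComplexOrder

namespace Matrix

section Eigenvalues

variable {n 𝕜 : Type*} [Fintype n] [DecidableEq n] [RCLike 𝕜]

lemma IsHermitian.forall_eigenvalues_iff {A : Matrix n n 𝕜} (hA : A.IsHermitian)
    (p : ℝ → Prop) : (∀ i, p (hA.eigenvalues i)) ↔ ∀ x ∈ spectrum ℝ A, p x := by
  rw [hA.spectrum_real_eq_range_eigenvalues, Set.forall_mem_range]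

lemma IsHermitian.le_eigenvalues_iff {A : Matrix n n 𝕜} (hA : A.IsHermitian) (c : ℝ) :
    (∀ i, c ≤ hA.eigenvalues i) ↔ (A - c • 1).PosSemidef := by
  have hB : (A - c • 1).IsHermitian := hA.sub (isHermitian_one.smul (IsSelfAdjoint.all c))
  simp only [hB.posSemidef_iff_eigenvalues_nonneg, Pi.le_def, Pi.zero_apply]
  rw [hA.forall_eigenvalues_iff (c ≤ ·), hB.forall_eigenvalues_iff (0 ≤ ·),
    ← Algebra.algebraMap_eq_smul_one, ← spectrum.sub_singleton_eq]
  simp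

lemma IsHermitian.eigenvalues_le_iff {A : Matrix n n 𝕜} (hA : A.IsHermitian) (c : ℝ) :
    (∀ i, hA.eigenvalues i ≤ c) ↔ (c • 1 - A).PosSemidef := by
  have hB : (c • 1 - A).IsHermitian := (isHermitian_one.smul (IsSelfAdjoint.all c)).sub hA
  simp only [hB.posSemidef_iff_eigenvalues_nonneg, Pi.le_def, Pi.zero_apply]
  rw [hA.forall_eigenvalues_iff (· ≤ c), hB.forall_eigenvalues_iff (0 ≤ ·),
    ← Algebra.algebraMap_eq_smul_one, ← spectrum.singleton_sub_eq]
  simp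

lemma PosSemidef.kronecker_sub_smul_one {p : Type*} [Fintype p] [DecidableEq p]
    {G₁ : Matrix n n 𝕜} {G₂ : Matrix p p 𝕜} {c₁ c₂ : ℝ} (hc₁ : 0 ≤ c₁)
    (h₁ : (G₁ - c₁ • 1).PosSemidef) (hG₂ : G₂.PosSemidef) (h₂ : (G₂ - c₂ • 1).PosSemidef) :
    (G₁ ⊗ₖ G₂ - (c₁ * c₂) • 1).PosSemidef := by
  have split :
      G₁ ⊗ₖ G₂ - (c₁ * c₂) • 1 = (G₁ - c₁ • 1) ⊗ₖ G₂ + c₁ • (1 ⊗ₖ (G₂ - c₂ • 1)) := by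
    have h₂' : (1 : Matrix n n 𝕜) ⊗ₖ G₂ = 1 ⊗ₖ (G₂ - c₂ • 1) + c₂ • 1 := by
      rw [← one_kronecker_one, ← kronecker_smul, ← kronecker_add, sub_add_cancel]
    conv_lhs => rw [← sub_add_cancel G₁ (c₁ • 1), add_kronecker, smul_kronecker, h₂']
    rw [smul_add, smul_smul]
    abel
  rw [split]
  exact (h₁.kronecker hG₂).add ((PosSemidef.one.kronecker h₂).smul hc₁)

end Eigenvalues

lemma transpose_kronecker_mul_kronecker {R l m n p : Type*} [CommSemiring R] [Fintype l]
    [Fintype n] (A C : Matrix l m R) (B D : Matrix n p R) :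
    (A ⊗ₖ B)ᵀ * (C ⊗ₖ D) = (Aᵀ * C) ⊗ₖ (Bᵀ * D) := by
  rw [← kroneckerMap_transpose, ← mul_kronecker_mul]

lemma isHermitian_transpose_mul_self {m n : Type*} [Fintype m] (A : Matrix m n ℝ) :
    (Aᵀ * A).IsHermitian := by
  simpa using isHermitian_conjTranspose_mul_self A

lemma posSemidef_transpose_mul_self {m n : Type*} [Fintype m] [Fintype n]
    (A : Matrix m n ℝ) : (Aᵀ * A).PosSemidef := by
  simpa using posSemidef_conjTranspose_mul_self A

lemma posSemidef_one_sub_transpose_mul_self_of_orthonormal {m n p : Type*} [Fintype m]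
    [Fintype n] [Fintype p] [DecidableEq n] [DecidableEq p] {X : Matrix m n ℝ}
    {Y : Matrix m p ℝ} (hX : Xᵀ * X = 1) (hY : Yᵀ * Y = 1) :
    (1 - (Xᵀ * Y)ᵀ * (Xᵀ * Y)).PosSemidef := by
  set B := Xᵀ * Y with hB
  have residual : (Y - X * B)ᵀ * (Y - X * B) = 1 - Bᵀ * B := by
    have hYX : Yᵀ * X = Bᵀ := by rw [hB, transpose_mul, transpose_transpose]
    rw [transpose_sub, transpose_mul, Matrix.sub_mul, Matrix.mul_sub, Matrix.mul_sub, hY,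
      ← Matrix.mul_assoc, hYX, Matrix.mul_assoc Bᵀ, ← hB, Matrix.mul_assoc Bᵀ,
      ← Matrix.mul_assoc Xᵀ, hX, Matrix.one_mul]
    abel
  rw [← residual]
  exact posSemidef_transpose_mul_self _

end Matrix

section SMin

variable {m n p q : Type*} [Fintype m] [Fintype n] [Fintype p] [Fintype q]
  [DecidableEq n] [DecidableEq q]

lemma sMin_nonneg (A : Matrix m n ℝ) : 0 ≤ sMin A := Real.sqrt_nonneg _

lemma sMin_of_isEmpty [IsEmpty n] (A : Matrix m n ℝ) : sMin A = 0 := by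
  rw [sMin, iInf_of_isEmpty, Real.sInf_empty, Real.sqrt_zero]

lemma sq_sMin (A : Matrix m n ℝ) :
    sMin A ^ 2 = ⨅ i, (isHermitian_transpose_mul_self A).eigenvalues i :=
  Real.sq_sqrt <| Real.iInf_nonneg (posSemidef_transpose_mul_self A).eigenvalues_nonneg

lemma le_sq_sMin_iff [Nonempty n] (A : Matrix m n ℝ) (c : ℝ) :
    c ≤ sMin A ^ 2 ↔ (Aᵀ * A - c • 1).PosSemidef := by
  rw [sq_sMin, le_ciInf_iff (Set.finite_range _).bddBelow, IsHermitian.le_eigenvalues_iff]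

lemma sq_sMin_le_of_posSemidef {A : Matrix m n ℝ} {c : ℝ} (hc : 0 ≤ c)
    (h : (c • 1 - Aᵀ * A).PosSemidef) : sMin A ^ 2 ≤ c := by
  rcases isEmpty_or_nonempty n with hn | ⟨⟨i⟩⟩
  · simp [sMin_of_isEmpty, hc]
  · rw [sq_sMin]
    exact (ciInf_le (Set.finite_range _).bddBelow i).trans
      (((isHermitian_transpose_mul_self A).eigenvalues_le_iff c).mpr h i)

lemma sMin_transpose_mul_le_one {X : Matrix m n ℝ} {Y : Matrix m q ℝ} (hX : Xᵀ * X = 1)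
    (hY : Yᵀ * Y = 1) : sMin (Xᵀ * Y) ≤ 1 := by
  refine (pow_le_one_iff_of_nonneg (sMin_nonneg _) two_ne_zero).mp ?_
  refine sq_sMin_le_of_posSemidef zero_le_one ?_
  rw [one_smul]
  exact posSemidef_one_sub_transpose_mul_self_of_orthonormal hX hY

lemma sMin_mul_sMin_le_sMin_kronecker (A : Matrix m n ℝ) (B : Matrix p q ℝ) :
    sMin A * sMin B ≤ sMin (A ⊗ₖ B) := by
  rcases isEmpty_or_nonempty n with hn | hn
  · simp [sMin_of_isEmpty A, sMin_nonneg]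
  rcases isEmpty_or_nonempty q with hq | hq
  · simp [sMin_of_isEmpty B, sMin_nonneg]
  refine (pow_le_pow_iff_left₀ (mul_nonneg (sMin_nonneg A) (sMin_nonneg B)) (sMin_nonneg _)
    two_ne_zero).mp ?_
  rw [le_sq_sMin_iff, mul_pow, transpose_kronecker_mul_kronecker]
  exact PosSemidef.kronecker_sub_smul_one (sq_nonneg _)
    ((le_sq_sMin_iff A _).mp le_rfl) (posSemidef_transpose_mul_self B)
    ((le_sq_sMin_iff B _).mp le_rfl)

end SMin

lemma sqrt_one_sub_sq_le_sqrt_two_mul_max {a b c : ℝ} (ha : 0 ≤ a) (ha₁ : a ≤ 1)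
    (hb : 0 ≤ b) (hb₁ : b ≤ 1) (hc : a * b ≤ c) :
    √(1 - c ^ 2) ≤ √2 * max √(1 - a ^ 2) √(1 - b ^ 2) := by
  rw [← Real.sqrt_monotone.map_max, ← Real.sqrt_mul zero_le_two]
  refine Real.sqrt_le_sqrt ?_
  have hc_sq : (a * b) ^ 2 ≤ c ^ 2 := pow_le_pow_left₀ (mul_nonneg ha hb) hc 2
  have ha_sq : a ^ 2 ≤ 1 := pow_le_one₀ ha ha₁
  calc 1 - c ^ 2 ≤ (1 - a ^ 2) + a ^ 2 * (1 - b ^ 2) := by nlinarith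
    _ ≤ (1 - a ^ 2) + (1 - b ^ 2) := by nlinarith [pow_le_one₀ hb hb₁ (n := 2)]
    _ ≤ 2 * max (1 - a ^ 2) (1 - b ^ 2) := by
      linarith [le_max_left (1 - a ^ 2) (1 - b ^ 2), le_max_right (1 - a ^ 2) (1 - b ^ 2)]

/-- For `A₁, Â₁ ∈ ℝ^{I₁×r₁}`, `A₂, Â₂ ∈ ℝ^{I₂×r₂}` with orthonormal columns and
`M = A₁ ⊗ A₂`, `M̂ = Â₁ ⊗ Â₂`, one has
`‖sin Θ(M, M̂)‖ ≤ √2 · max{‖sin Θ(A₁, Â₁)‖, ‖sin Θ(A₂, Â₂)‖}`. -/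
theorem sinTheta_kronecker_two {I₁ I₂ r₁ r₂ : ℕ}
    (A₁ Ah₁ : Matrix (Fin I₁) (Fin r₁) ℝ) (A₂ Ah₂ : Matrix (Fin I₂) (Fin r₂) ℝ)
    (hA₁ : A₁ᵀ * A₁ = 1) (hAh₁ : Ah₁ᵀ * Ah₁ = 1)
    (hA₂ : A₂ᵀ * A₂ = 1) (hAh₂ : Ah₂ᵀ * Ah₂ = 1) :
    sinTheta (A₁ ⊗ₖ A₂) (Ah₁ ⊗ₖ Ah₂) ≤
      Real.sqrt 2 * max (sinTheta A₁ Ah₁) (sinTheta A₂ Ah₂) := by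
  rw [sinTheta, sinTheta, sinTheta, transpose_kronecker_mul_kronecker]
  exact sqrt_one_sub_sq_le_sqrt_two_mul_max (sMin_nonneg _) (sMin_transpose_mul_le_one hA₁ hAh₁)
    (sMin_nonneg _) (sMin_transpose_mul_le_one hA₂ hAh₂) (sMin_mul_sMin_le_sMin_kronecker _ _)
end

section
/- Let a = (a₁, …, a_n) ∈ ℝⁿ be a nonzero vector and b = (δ₁a₁, …, δ_n a_n) where δ₁, …, δ_n are i.i.d. Bernoulli(p) random variables. If p ≥ (256/9)·‖a‖_∞²/‖a‖₂², then with probability at least 0.996, (√p/2)·‖a‖₂ ≤ ‖b‖₂ ≤ (√(7p)/2)·‖a‖₂. -/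
/-!
Write ‖b‖₂² = p‖a‖₂² + z with z = Σₖ (δₖ - p) aₖ², a sum of independent centred terms bounded by
M² = ‖a‖_∞², of total variance at most p M² ‖a‖₂². Since eˣ ≤ 1 + x + 5x²/8 for |x| ≤ 9/16, each
term has moment generating function at most exp (5 s² Var / 8) as long as s M² ≤ 9/16, and the
Chernoff bound with s = 3/σ at t = 4σ, where σ = M √p ‖a‖₂, gives P(|z| ≥ t) ≤ 2 e^(-51/8) < 0.004.
The hypothesis on p says 16 M ≤ 3 √p ‖a‖₂, which yields both s M² ≤ 9/16 and t ≤ (3/4) p ‖a‖₂²;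
off the exceptional event ‖b‖₂² therefore lies between p‖a‖₂²/4 and 7p‖a‖₂²/4.
-/

open MeasureTheory ProbabilityTheory Real

lemma Real.exp_le_one_add_add_sq {x : ℝ} (hx : |x| ≤ 9 / 16) :
    exp x ≤ 1 + x + 5 / 8 * x ^ 2 := by
  -- the cubic Taylor remainder is at most (2/9)|x|³ ≤ x²/8
  have htaylor := Real.exp_bound (hx.trans (by norm_num)) (n := 3) (by norm_num)
  norm_num [Finset.sum_range_succ, Nat.factorial] at htaylor
  have hcube : |x| ^ 3 ≤ 9 / 16 * x ^ 2 := by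
    rw [pow_succ, sq_abs, mul_comm]
    exact mul_le_mul_of_nonneg_right hx (sq_nonneg x)
  linarith [(abs_sub_le_iff.1 htaylor).1]

lemma five_hundred_le_exp_51_div_8 : 500 ≤ exp (51 / 8) := by
  have he : (2.7 : ℝ) ^ 6 ≤ exp 1 ^ 6 :=
    pow_le_pow_left₀ (by norm_num) (exp_one_gt_d9.le.trans' (by norm_num)) 6
  calc (500 : ℝ) ≤ 2.7 ^ 6 * (3 / 8 + 1) := by norm_num
    _ ≤ exp 1 ^ 6 * exp (3 / 8) := by gcongr; exact add_one_le_exp _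
    _ = exp (51 / 8) := by rw [← exp_nat_mul, ← exp_add]; norm_num

lemma two_mul_exp_le_of_le_sq {σ v : ℝ} (hσ : 0 < σ) (hv : v ≤ σ ^ 2) :
    2 * exp (-(3 / σ) * (4 * σ) + 5 / 8 * (3 / σ) ^ 2 * v) ≤ 0.004 := by
  -- at v = σ² the exponent is -12 + 45/8
  have hexponent : -(3 / σ) * (4 * σ) + 5 / 8 * (3 / σ) ^ 2 * v ≤ -(51 / 8) := by
    have hsq : (3 / σ) ^ 2 * σ ^ 2 = 9 := by field_simp; norm_num
    have hst : 3 / σ * (4 * σ) = 12 := by field_simp; norm_num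
    nlinarith [mul_le_mul_of_nonneg_left hv (sq_nonneg (3 / σ))]
  calc 2 * exp (-(3 / σ) * (4 * σ) + 5 / 8 * (3 / σ) ^ 2 * v) ≤ 2 * exp (-(51 / 8)) := by
        gcongr
    _ ≤ 2 * 500⁻¹ := by
        rw [exp_neg]
        gcongr
        exact five_hundred_le_exp_51_div_8
    _ = 0.004 := by norm_num

lemma sqrt_bounds_of_abs_sub_le {p S x : ℝ} (hp : 0 ≤ p) (hS : 0 ≤ S)
    (hx : |x - p * S| ≤ 3 / 4 * (p * S)) :
    √p / 2 * √S ≤ √x ∧ √x ≤ √(7 * p) / 2 * √S := by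
  have hsq : ∀ q, 0 ≤ q → (√q / 2 * √S) ^ 2 = q * S / 4 := fun q hq => by
    rw [mul_pow, div_pow, sq_sqrt hq, sq_sqrt hS]; ring
  obtain ⟨hlow, hhigh⟩ := abs_le.1 hx
  constructor
  · rw [le_sqrt (by positivity) (by nlinarith [mul_nonneg hp hS]), hsq p hp]
    linarith
  · rw [sqrt_le_left (by positivity), hsq (7 * p) (by positivity)]
    linarith

section

variable {ι : Type*} [Fintype ι]

lemma sum_sq_sq_le_mul_sum_sq {a : ι → ℝ} {M : ℝ} (haM : ∀ k, |a k| ≤ M) :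
    ∑ k, (a k ^ 2) ^ 2 ≤ M ^ 2 * ∑ k, a k ^ 2 := by
  rw [Finset.mul_sum]
  refine Finset.sum_le_sum fun k _ => ?_
  rw [sq (a k ^ 2), ← sq_abs (a k)]
  gcongr
  exact haM k

lemma sum_mul_sq_eq_of_zero_or_one {d : ι → ℝ} (hd : ∀ k, d k = 0 ∨ d k = 1) (a : ι → ℝ)
    (p : ℝ) : ∑ k, (d k * a k) ^ 2 = p * ∑ k, a k ^ 2 + ∑ k, (d k - p) * a k ^ 2 := by
  rw [Finset.mul_sum, ← Finset.sum_add_distrib]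
  refine Finset.sum_congr rfl fun k _ => ?_
  rcases hd k with h | h <;> rw [h] <;> ring

variable {Ω : Type*} [MeasurableSpace Ω]

lemma integral_eq_measureReal_of_zero_or_one (μ : Measure Ω) {d : Ω → ℝ} (hd : Measurable d)
    (hval : ∀ ω, d ω = 0 ∨ d ω = 1) : μ[d] = μ.real {ω | d ω = 1} := by
  calc μ[d] = ∫ ω, {ω | d ω = 1}.indicator (fun _ => (1 : ℝ)) ω ∂μ := by
        congr with ω
        rcases hval ω with h | h <;> simp [h]
    _ = μ.real {ω | d ω = 1} := by
        have hA : MeasurableSet {ω | d ω = 1} := hd (measurableSet_singleton 1)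
        rw [integral_indicator_const _ hA, smul_eq_mul, mul_one]

variable {μ : Measure Ω} [IsProbabilityMeasure μ]

lemma integrable_of_zero_or_one {d : Ω → ℝ} (hd : Measurable d)
    (hval : ∀ ω, d ω = 0 ∨ d ω = 1) : Integrable d μ :=
  .of_bound hd.aestronglyMeasurable 1 (.of_forall fun ω => by rcases hval ω with h | h <;> simp [h])

lemma integral_sub_mul_sq_le {d : Ω → ℝ} {p : ℝ} (hd : Measurable d)
    (hval : ∀ ω, d ω = 0 ∨ d ω = 1) (hmean : μ[d] = p) (w : ℝ) :
    ∫ ω, ((d ω - p) * w) ^ 2 ∂μ ≤ p * w ^ 2 := by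
  have hdint := integrable_of_zero_or_one (μ := μ) hd hval
  calc ∫ ω, ((d ω - p) * w) ^ 2 ∂μ = ∫ ω, (1 - 2 * p) * w ^ 2 * d ω + p ^ 2 * w ^ 2 ∂μ := by
        congr with ω
        rcases hval ω with h | h <;> rw [h] <;> ring
    _ = (1 - 2 * p) * w ^ 2 * p + p ^ 2 * w ^ 2 := by
        rw [integral_add (hdint.const_mul _) (integrable_const _), integral_const_mul, hmean]
        simp
    _ ≤ p * w ^ 2 := by nlinarith [sq_nonneg (p * w)]

lemma ofReal_one_sub_le_measure {E T : Set Ω} (hET : Tᶜ ⊆ E) {ε : ℝ} (hT : μ.real T ≤ ε) :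
    ENNReal.ofReal (1 - ε) ≤ μ E := by
  have hcover : (1 : ℝ) ≤ μ.real E + μ.real T := by
    calc (1 : ℝ) = μ.real Set.univ := probReal_univ.symm
      _ ≤ μ.real (E ∪ T) := measureReal_mono fun ω _ => by
          by_cases hω : ω ∈ T
          · exact Or.inr hω
          · exact Or.inl (hET hω)
      _ ≤ μ.real E + μ.real T := measureReal_union_le E T
  rw [← ofReal_measureReal]
  exact ENNReal.ofReal_le_ofReal (by linarith)

lemma mgf_le_exp_of_abs_le {X : Ω → ℝ} {c t : ℝ} (hX : AEMeasurable X μ)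
    (hXc : ∀ᵐ ω ∂μ, |X ω| ≤ c) (htc : |t| * c ≤ 9 / 16) (hmean : μ[X] = 0) :
    mgf X μ t ≤ exp (5 / 8 * t ^ 2 * ∫ ω, X ω ^ 2 ∂μ) := by
  have hXint : Integrable X μ := .of_bound hX.aestronglyMeasurable c hXc
  have hX2int : Integrable (fun ω => X ω ^ 2) μ := by
    refine .of_bound (hX.pow_const 2).aestronglyMeasurable (c ^ 2) ?_
    filter_upwards [hXc] with ω hω
    rw [norm_pow, Real.norm_eq_abs]
    exact pow_le_pow_left₀ (abs_nonneg _) hω 2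
  have hlin : Integrable (fun ω => 1 + t * X ω) μ := (integrable_const 1).add (hXint.const_mul t)
  calc mgf X μ t ≤ ∫ ω, 1 + t * X ω + 5 / 8 * t ^ 2 * X ω ^ 2 ∂μ := by
        refine integral_mono_of_nonneg (.of_forall fun ω => (exp_pos _).le)
          (hlin.add (hX2int.const_mul _)) ?_
        filter_upwards [hXc] with ω hω
        refine (exp_le_one_add_add_sq ?_).trans_eq (by ring)
        rw [abs_mul]
        exact (mul_le_mul_of_nonneg_left hω (abs_nonneg t)).trans htc
    _ = 1 + 5 / 8 * t ^ 2 * ∫ ω, X ω ^ 2 ∂μ := by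
        rw [integral_add hlin (hX2int.const_mul _),
          integral_add (integrable_const 1) (hXint.const_mul t), integral_const_mul,
          integral_const_mul, hmean]
        simp
    _ ≤ exp (5 / 8 * t ^ 2 * ∫ ω, X ω ^ 2 ∂μ) := by
        linarith [add_one_le_exp (5 / 8 * t ^ 2 * ∫ ω, X ω ^ 2 ∂μ)]

theorem measure_sum_ge_le_of_abs_le {X : ι → Ω → ℝ} (hindep : iIndepFun X μ)
    (hmeas : ∀ k, Measurable (X k)) (hmean : ∀ k, μ[X k] = 0) {c s : ℝ}
    (hXc : ∀ k, ∀ᵐ ω ∂μ, |X k ω| ≤ c) (hs : 0 ≤ s) (hsc : s * c ≤ 9 / 16) (t : ℝ) :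
    μ.real {ω | t ≤ ∑ k, X k ω} ≤
      exp (-s * t + 5 / 8 * s ^ 2 * ∑ k, ∫ ω, X k ω ^ 2 ∂μ) := by
  have hint : Integrable (fun ω => exp (s * (∑ k, X k) ω)) μ :=
    hindep.integrable_exp_mul_sum hmeas fun k _ =>
      integrable_exp_mul_of_mem_Icc (hmeas k).aemeasurable ((hXc k).mono fun _ => abs_le.1)
  calc μ.real {ω | t ≤ ∑ k, X k ω} ≤ exp (-s * t) * ∏ k, mgf (X k) μ s := by
        simpa [hindep.mgf_sum hmeas] using measure_ge_le_exp_mul_mgf t hs hint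
    _ ≤ exp (-s * t) * ∏ k, exp (5 / 8 * s ^ 2 * ∫ ω, X k ω ^ 2 ∂μ) := by
        gcongr with k
        · exact fun k _ => mgf_nonneg
        · exact mgf_le_exp_of_abs_le (hmeas k).aemeasurable (hXc k)
            (by rwa [abs_of_nonneg hs]) (hmean k)
    _ = exp (-s * t + 5 / 8 * s ^ 2 * ∑ k, ∫ ω, X k ω ^ 2 ∂μ) := by
        rw [← exp_sum, ← exp_add, Finset.mul_sum]

theorem measure_abs_sum_ge_le_of_abs_le {X : ι → Ω → ℝ} (hindep : iIndepFun X μ)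
    (hmeas : ∀ k, Measurable (X k)) (hmean : ∀ k, μ[X k] = 0) {c s : ℝ}
    (hXc : ∀ k, ∀ᵐ ω ∂μ, |X k ω| ≤ c) (hs : 0 ≤ s) (hsc : s * c ≤ 9 / 16) (t : ℝ) :
    μ.real {ω | t ≤ |∑ k, X k ω|} ≤
      2 * exp (-s * t + 5 / 8 * s ^ 2 * ∑ k, ∫ ω, X k ω ^ 2 ∂μ) := by
  have hupper := measure_sum_ge_le_of_abs_le hindep hmeas hmean hXc hs hsc t
  have hlower := measure_sum_ge_le_of_abs_le (X := fun k ω => -X k ω)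
    (hindep.comp (fun _ x => -x) fun _ => measurable_neg) (fun k => (hmeas k).neg)
    (fun k => by rw [integral_neg, hmean k, neg_zero])
    (fun k => (hXc k).mono fun ω h => by rwa [abs_neg]) hs hsc t
  simp only [neg_sq, Finset.sum_neg_distrib] at hlower
  calc μ.real {ω | t ≤ |∑ k, X k ω|}
      ≤ μ.real ({ω | t ≤ ∑ k, X k ω} ∪ {ω | t ≤ -∑ k, X k ω}) :=
        measureReal_mono fun ω (hω : t ≤ |_|) => le_abs.1 hω
    _ ≤ _ := (measureReal_union_le _ _).trans (by linarith)

theorem measure_abs_sum_sub_mul_ge_le {δ : ι → Ω → ℝ} {p : ℝ} (hp0 : 0 ≤ p) (hp1 : p ≤ 1)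
    (hmeas : ∀ k, Measurable (δ k)) (hval : ∀ k ω, δ k ω = 0 ∨ δ k ω = 1)
    (hber : ∀ k, μ {ω | δ k ω = 1} = ENNReal.ofReal p) (hindep : iIndepFun δ μ) {w : ι → ℝ}
    {m s : ℝ} (hw : ∀ k, |w k| ≤ m) (hs : 0 ≤ s) (hsm : s * m ≤ 9 / 16) (t : ℝ) :
    μ.real {ω | t ≤ |∑ k, (δ k ω - p) * w k|} ≤
      2 * exp (-s * t + 5 / 8 * s ^ 2 * (p * ∑ k, w k ^ 2)) := by
  have hmean : ∀ k, μ[δ k] = p := fun k => by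
    rw [integral_eq_measureReal_of_zero_or_one μ (hmeas k) (hval k), measureReal_def, hber k,
      ENNReal.toReal_ofReal hp0]
  have hcentered : ∀ k, μ[fun ω => (δ k ω - p) * w k] = 0 := fun k => by
    rw [integral_mul_const, integral_sub (integrable_of_zero_or_one (hmeas k) (hval k))
      (integrable_const p), hmean k]
    simp
  have hbound : ∀ k, ∀ᵐ ω ∂μ, |(δ k ω - p) * w k| ≤ m := fun k => .of_forall fun ω => by
    have hdev : |δ k ω - p| ≤ 1 := by
      rcases hval k ω with h | h <;> rw [h, abs_le] <;> constructor <;> linarith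
    rw [abs_mul]
    exact (mul_le_of_le_one_left (abs_nonneg _) hdev).trans (hw k)
  refine (measure_abs_sum_ge_le_of_abs_le
    (hindep.comp (fun k x => (x - p) * w k) fun _ => by fun_prop)
    (fun k => by fun_prop) hcentered hbound hs hsm t).trans ?_
  gcongr
  rw [Finset.mul_sum]
  exact Finset.sum_le_sum fun k _ => integral_sub_mul_sq_le (hmeas k) (hval k) (hmean k) (w k)

theorem measure_abs_sum_sub_mul_sq_ge_le {δ : ι → Ω → ℝ} {p : ℝ} (hp0 : 0 ≤ p) (hp1 : p ≤ 1)
    (hmeas : ∀ k, Measurable (δ k)) (hval : ∀ k ω, δ k ω = 0 ∨ δ k ω = 1)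
    (hber : ∀ k, μ {ω | δ k ω = 1} = ENNReal.ofReal p) (hindep : iIndepFun δ μ) {a : ι → ℝ}
    {M : ℝ} (hM : 0 < M) (haM : ∀ k, |a k| ≤ M) (hMR : 16 * M ≤ 3 * √(p * ∑ k, a k ^ 2)) :
    μ.real {ω | 4 * (M * √(p * ∑ k, a k ^ 2)) ≤ |∑ k, (δ k ω - p) * a k ^ 2|} ≤ 0.004 := by
  set R := √(p * ∑ k, a k ^ 2)
  have hR : 0 < R := by linarith
  have hsq : ∀ k, |a k ^ 2| ≤ M ^ 2 := fun k => by
    rw [abs_pow]; exact pow_le_pow_left₀ (abs_nonneg _) (haM k) 2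
  have hvar : p * ∑ k, (a k ^ 2) ^ 2 ≤ (M * R) ^ 2 := by
    rw [mul_pow, sq_sqrt (by positivity)]
    nlinarith [sum_sq_sq_le_mul_sum_sq haM]
  refine (measure_abs_sum_sub_mul_ge_le hp0 hp1 hmeas hval hber hindep hsq
    (by positivity) ?_ _).trans (two_mul_exp_le_of_le_sq (by positivity) hvar)
  rw [div_mul_eq_mul_div, div_le_iff₀ (by positivity)]
  nlinarith [mul_le_mul_of_nonneg_left hMR hM.le]

end

theorem sampled_vector_norm_general {Ω : Type*} [MeasurableSpace Ω] (μm : Measure Ω)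
    [IsProbabilityMeasure μm]
    (n : ℕ) (p : ℝ)
    (a : Fin n → ℝ) (ha : a ≠ 0)
    (δ : Fin n → Ω → ℝ)
    (hmeas : ∀ k, Measurable (δ k))
    (hval : ∀ k ω, δ k ω = 0 ∨ δ k ω = 1)
    (hber : ∀ k, μm {ω | δ k ω = 1} = ENNReal.ofReal p)
    (hindep : iIndepFun δ μm)
    (b : Ω → Fin n → ℝ) (hb : ∀ ω k, b ω k = δ k ω * a k)
    (hp : (256 / 9) * ((⨆ k, |a k|) ^ 2 / (∑ k, a k ^ 2)) ≤ p) :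
    ENNReal.ofReal 0.996 ≤
      μm {ω | Real.sqrt p / 2 * Real.sqrt (∑ k, a k ^ 2) ≤ Real.sqrt (∑ k, b ω k ^ 2) ∧
              Real.sqrt (∑ k, b ω k ^ 2) ≤ Real.sqrt (7 * p) / 2 * Real.sqrt (∑ k, a k ^ 2)} := by
  set S := ∑ k, a k ^ 2
  set M := ⨆ k, |a k|
  have hMk : ∀ k, |a k| ≤ M := le_ciSup (Set.finite_range _).bddAbove
  obtain ⟨k₀, hk₀⟩ : ∃ k, a k ≠ 0 := Function.ne_iff.1 ha
  have hS : 0 < S :=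
    Finset.sum_pos' (fun k _ => sq_nonneg _) ⟨k₀, Finset.mem_univ _, by positivity⟩
  have hM : 0 < M := (abs_pos.2 hk₀).trans_le (hMk k₀)
  have hp0 : 0 < p := lt_of_lt_of_le (by positivity) hp
  have hp1 : p ≤ 1 := ENNReal.ofReal_le_one.1 (hber k₀ ▸ prob_le_one)
  set R := √(p * S)
  have hMR : 16 * M ≤ 3 * R := by
    rw [mul_div_assoc', div_le_iff₀ hS] at hp
    rw [← pow_le_pow_iff_left₀ (by positivity) (by positivity) two_ne_zero, mul_pow, mul_pow,
      sq_sqrt (by positivity)]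
    linarith
  have htail := measure_abs_sum_sub_mul_sq_ge_le hp0.le hp1 hmeas hval hber hindep hM hMk hMR
  refine (ENNReal.ofReal_le_ofReal (by norm_num)).trans (ofReal_one_sub_le_measure ?_ htail)
  intro ω (hω : ¬ _)
  refine sqrt_bounds_of_abs_sub_le hp0.le hS.le ?_
  simp_rw [hb]
  rw [sum_mul_sq_eq_of_zero_or_one (hval · ω) a p, add_sub_cancel_left]
  have hthreshold : 4 * (M * R) ≤ 3 / 4 * (p * S) := by
    rw [← sq_sqrt (by positivity : 0 ≤ p * S)]
    nlinarith [mul_le_mul_of_nonneg_right hMR (sqrt_nonneg (p * S))]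
  exact (not_le.1 hω).le.trans hthreshold

/-- Let `a ∈ ℝⁿ` be nonzero, `δ₁,…,δ_n` i.i.d. Bernoulli(p), and `b = (δ₁a₁,…,δ_na_n)`.
If `p ≥ (256/9)·‖a‖_∞²/‖a‖₂²`, then with probability at least `0.996`,
`(√p/2)‖a‖₂ ≤ ‖b‖₂ ≤ (√(7p)/2)‖a‖₂`. -/
theorem sampled_vector_norm {Ω : Type*} [MeasurableSpace Ω] (μm : Measure Ω)
    [IsProbabilityMeasure μm]
    (n : ℕ) (hn : 0 < n) (p : ℝ)
    (a : Fin n → ℝ) (ha : a ≠ 0)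
    (δ : Fin n → Ω → ℝ)
    (hmeas : ∀ k, Measurable (δ k))
    (hval : ∀ k ω, δ k ω = 0 ∨ δ k ω = 1)
    (hber : ∀ k, μm {ω | δ k ω = 1} = ENNReal.ofReal p)
    (hindep : iIndepFun δ μm)
    (b : Ω → Fin n → ℝ) (hb : ∀ ω k, b ω k = δ k ω * a k)
    (hp : (256 / 9) * ((⨆ k, |a k|) ^ 2 / (∑ k, a k ^ 2)) ≤ p) :
    ENNReal.ofReal 0.996 ≤
      μm {ω | Real.sqrt p / 2 * Real.sqrt (∑ k, a k ^ 2) ≤ Real.sqrt (∑ k, b ω k ^ 2) ∧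
              Real.sqrt (∑ k, b ω k ^ 2) ≤ Real.sqrt (7 * p) / 2 * Real.sqrt (∑ k, a k ^ 2)} :=
  sampled_vector_norm_general μm n p a ha δ hmeas hval hber hindep b hb hp
end

section
/- Let L ∈ ℝ^{m×r} have orthonormal columns, let t ∈ ℝ^m, and write t = t₁ + t₂ where t₁ ∈ R(L) (the column space of L) and t₂ ⊥ R(L). Let P_Ω be a row-selection matrix such that P_Ω L has full column rank. Then the least-squares solution x̃ = (P_Ω L)† P_Ω t satisfies L x̃ = L x* + L (P_Ω L)† P_Ω t₂, where x* = L† t₁ = Lᵀ t₁ is the full least-squares solution; consequently ‖L x̃ − t‖² = ‖L(P_Ω L)† P_Ω t₂‖² + ‖t₂‖². -/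
open Matrix

/-- Moore–Penrose pseudoinverse of a full-column-rank matrix. -/
noncomputable def pinv {s r : ℕ} (B : Matrix (Fin s) (Fin r) ℝ) : Matrix (Fin r) (Fin s) ℝ :=
  (Bᵀ * B)⁻¹ * Bᵀ

/-- Let `L ∈ ℝ^{m×r}` have orthonormal columns, `t = t₁ + t₂` with `t₁ ∈ R(L)` and
`t₂ ⊥ R(L)`, and let `P_Ω` be a row-selection matrix with `P_Ω L` of full column rank.
Then the least-squares solution `x̃ = (P_Ω L)† P_Ω t` satisfies
`L x̃ = L x* + L (P_Ω L)† P_Ω t₂` where `x* = Lᵀ t₁`, and consequently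
`‖L x̃ − t‖² = ‖L(P_Ω L)† P_Ω t₂‖² + ‖t₂‖²`. -/
theorem partial_ls_decomposition {m r s : ℕ}
    (L : Matrix (Fin m) (Fin r) ℝ) (hL : Lᵀ * L = 1)
    (t t₁ t₂ : Fin m → ℝ) (ht : t = t₁ + t₂)
    (ht₁ : L *ᵥ (Lᵀ *ᵥ t₁) = t₁) (ht₂ : Lᵀ *ᵥ t₂ = 0)
    (P : Matrix (Fin s) (Fin m) ℝ)
    (hP : ∃ f : Fin s → Fin m, Function.Injective f ∧
      ∀ i j, P i j = if j = f i then 1 else 0)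
    (hrank : (P * L).rank = r)
    (xtil xstar : Fin r → ℝ)
    (hxtil : xtil = pinv (P * L) *ᵥ (P *ᵥ t))
    (hxstar : xstar = Lᵀ *ᵥ t₁) :
    L *ᵥ xtil = L *ᵥ xstar + L *ᵥ (pinv (P * L) *ᵥ (P *ᵥ t₂)) ∧
    (∑ i, (L *ᵥ xtil - t) i ^ 2) =
      (∑ i, (L *ᵥ (pinv (P * L) *ᵥ (P *ᵥ t₂))) i ^ 2) + ∑ i, t₂ i ^ 2 := by
  set B := P * L with hB
  set G := Bᵀ * B with hG
  -- G is invertible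
  have hGrank : G.rank = r := by rw [hG, Matrix.rank_transpose_mul_self, hrank]
  have hGunit : IsUnit G := by
    rw [← Matrix.mulVec_surjective_iff_isUnit]
    have : LinearMap.range G.mulVecLin = ⊤ := by
      apply Submodule.eq_top_of_finrank_eq
      rw [← Matrix.rank, hGrank, Module.finrank_fintype_fun_eq_card, Fintype.card_fin]
    intro y
    have := this ▸ Submodule.mem_top (R := ℝ) (x := y)
    obtain ⟨x, hx⟩ := this
    exact ⟨x, hx⟩
  have hGdet : IsUnit G.det := (Matrix.isUnit_iff_isUnit_det G).mp hGunit
  have hpinvB : pinv B * B = 1 := by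
    rw [pinv, Matrix.mul_assoc, ← hG, Matrix.nonsing_inv_mul G hGdet]
  -- t₁ = L *ᵥ xstar
  have ht₁' : L *ᵥ xstar = t₁ := by rw [hxstar]; exact ht₁
  -- pinv B (P t₁) = xstar
  have hkey : pinv B *ᵥ (P *ᵥ t₁) = xstar := by
    have h2 : P *ᵥ (L *ᵥ xstar) = B *ᵥ xstar := by rw [Matrix.mulVec_mulVec, ← hB]
    rw [← ht₁', h2, Matrix.mulVec_mulVec, hpinvB, Matrix.one_mulVec]
  set v := pinv B *ᵥ (P *ᵥ t₂) with hv
  have hxtil' : xtil = xstar + v := by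
    rw [hxtil, ht, Matrix.mulVec_add, Matrix.mulVec_add, hkey]
  have hfirst : L *ᵥ xtil = L *ᵥ xstar + L *ᵥ v := by
    rw [hxtil', Matrix.mulVec_add]
  refine ⟨hfirst, ?_⟩
  have hdiff : L *ᵥ xtil - t = L *ᵥ v - t₂ := by
    rw [hfirst, ht, ht₁']
    abel
  have hdot : (L *ᵥ v) ⬝ᵥ t₂ = 0 := by
    have h1 : (L *ᵥ v) = v ᵥ* Lᵀ := (Matrix.vecMul_transpose L v).symm
    rw [h1, ← Matrix.dotProduct_mulVec, ht₂, dotProduct_zero]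
  have hexp : ∀ i, (L *ᵥ v - t₂) i ^ 2
      = (L *ᵥ v) i ^ 2 - 2 * ((L *ᵥ v) i * t₂ i) + t₂ i ^ 2 := by
    intro i; simp [Pi.sub_apply]; ring
  rw [hdiff]
  calc (∑ i, (L *ᵥ v - t₂) i ^ 2)
      = ∑ i, ((L *ᵥ v) i ^ 2 - 2 * ((L *ᵥ v) i * t₂ i) + t₂ i ^ 2) := by
        exact Finset.sum_congr rfl (fun i _ => hexp i)
    _ = (∑ i, (L *ᵥ v) i ^ 2) - 2 * ((L *ᵥ v) ⬝ᵥ t₂) + ∑ i, t₂ i ^ 2 := by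
        rw [dotProduct, Finset.mul_sum]
        rw [Finset.sum_add_distrib, Finset.sum_sub_distrib]
    _ = (∑ i, (L *ᵥ v) i ^ 2) + ∑ i, t₂ i ^ 2 := by rw [hdot]; ring
end

section
/- Let T = G ×₁ A^{(1)} ⋯ ×_N A^{(N)} where each A^{(n)} ∈ ℝ^{I_n×r_n} has orthonormal columns, let B^{(n)} ∈ ℝ^{I_n×r_n} have orthonormal columns, and set X_opt = G ×₁ (B^{(1)})ᵀA^{(1)} ⋯ ×_N (B^{(N)})ᵀA^{(N)}. Let sin θ = max_n ‖sin Θ(B^{(n)}, A^{(n)})‖ and φ = ‖X_opt ×₁ B^{(1)} ⋯ ×_N B^{(N)} − T‖_F. Then φ ≤ ‖T‖_F · [(1 + sin θ)^N − 1]. -/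
/-!
Write `Pₙ = A⁽ⁿ⁾A⁽ⁿ⁾ᵀ` and `Eₙ = B⁽ⁿ⁾B⁽ⁿ⁾ᵀ - Pₙ`. Since `Pₙ A⁽ⁿ⁾ = A⁽ⁿ⁾`, multiplying `T` by `Pₙ` in
every mode gives back `T`, while `X_opt ×₁ B⁽¹⁾ ⋯ ×_N B⁽ᴺ⁾ = T ×₁ (P₁ + E₁) ⋯ ×_N (P_N + E_N)`.
Expanding multilinearly, the residual is the sum, over the nonempty sets `S` of modes, of `T`
multiplied by `Eₙ` in the modes of `S` and by `Pₙ` in the others. A mode product scales the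
Frobenius norm by at most the spectral norm of the factor, and `‖Pₙ‖₂ ≤ 1`, so that term has norm
at most `(sin θ)^|S| ‖T‖_F`; summing over `S` gives `(1 + sin θ)^N - 1`.
-/

open Matrix

/-- Spectral norm (operator 2-norm) of a real matrix. -/
noncomputable def specNorm {m n : Type*} [Fintype m] [Fintype n] [DecidableEq n]
    (A : Matrix m n ℝ) : ℝ :=
  ‖LinearMap.toContinuousLinearMap (Matrix.toEuclideanLin A)‖

/-- Multilinear (Tucker) product of a core tensor with factor matrices in every mode. -/
noncomputable def tuckerMap {N : ℕ} {I r : Fin N → ℕ}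
    (A : ∀ k, Matrix (Fin (I k)) (Fin (r k)) ℝ)
    (G : (∀ k, Fin (r k)) → ℝ) : (∀ k, Fin (I k)) → ℝ :=
  fun i => ∑ j, (∏ k, A k (i k) (j k)) * G j

open scoped Matrix.Norms.L2Operator

lemma specNorm_eq_l2_opNorm {m n : Type*} [Fintype m] [Fintype n] [DecidableEq n]
    (A : Matrix m n ℝ) : specNorm A = ‖A‖ := rfl

lemma prod_add_eq_sum_prod_ite {ι R : Type*} [Fintype ι] [DecidableEq ι] [CommSemiring R]
    (f g : ι → R) :
    ∏ a, (f a + g a) = ∑ t : Finset ι, ∏ a, if a ∈ t then g a else f a := by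
  rw [← Finset.prod_congr rfl fun a _ => add_comm (g a) (f a), Fintype.prod_add]
  refine Finset.sum_congr rfl fun t _ => ?_
  rw [Finset.prod_ite]
  simp [Finset.compl_eq_univ_sdiff, Finset.filter_not]

lemma norm_toLp_eq_sqrt_sum_sq {ι : Type*} [Fintype ι] (x : ι → ℝ) :
    ‖WithLp.toLp 2 x‖ = √(∑ i, x i ^ 2) := by
  simp [EuclideanSpace.norm_eq]

lemma sum_sq_mulVec_le {m n : Type*} [Fintype m] [Fintype n] [DecidableEq n]
    (A : Matrix m n ℝ) (v : n → ℝ) :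
    ∑ i, (A *ᵥ v) i ^ 2 ≤ ‖A‖ ^ 2 * ∑ j, v j ^ 2 := by
  have h := A.l2_opNorm_mulVec (WithLp.toLp 2 v)
  rw [← Real.sqrt_le_sqrt_iff (by positivity), Real.sqrt_mul' _ (by positivity),
    Real.sqrt_sq (norm_nonneg _)]
  simpa [norm_toLp_eq_sqrt_sum_sq] using h

lemma norm_mul_transpose_le_one {m n : Type*} [Fintype m] [Fintype n] [DecidableEq m]
    [DecidableEq n] {A : Matrix m n ℝ} (hA : Aᵀ * A = 1) : ‖A * Aᵀ‖ ≤ 1 := by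
  -- The C⋆-identity gives `‖1‖ = ‖1‖ ^ 2`, hence `‖1‖ ≤ 1`, also when `n` is empty.
  have h1 : ‖(1 : Matrix n n ℝ)‖ = ‖(1 : Matrix n n ℝ)‖ * ‖(1 : Matrix n n ℝ)‖ := by
    simpa using l2_opNorm_conjTranspose_mul_self (1 : Matrix n n ℝ)
  have h2 : ‖A * Aᵀ‖ = ‖(1 : Matrix n n ℝ)‖ := by
    calc ‖A * Aᵀ‖ = ‖Aᵀᴴ * Aᵀ‖ := by
          rw [conjTranspose_eq_transpose_of_trivial, transpose_transpose]
      _ = ‖Aᴴ‖ * ‖Aᴴ‖ := by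
          rw [l2_opNorm_conjTranspose_mul_self, conjTranspose_eq_transpose_of_trivial]
      _ = ‖Aᴴ * A‖ := by rw [l2_opNorm_conjTranspose, l2_opNorm_conjTranspose_mul_self]
      _ = ‖(1 : Matrix n n ℝ)‖ := by rw [conjTranspose_eq_transpose_of_trivial, hA]
  nlinarith [norm_nonneg (1 : Matrix n n ℝ)]

section Tucker

variable {N : ℕ}

lemma tuckerMap_tuckerMap {I m r : Fin N → ℕ}
    (B : ∀ k, Matrix (Fin (I k)) (Fin (m k)) ℝ) (C : ∀ k, Matrix (Fin (m k)) (Fin (r k)) ℝ)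
    (G : (∀ k, Fin (r k)) → ℝ) :
    tuckerMap B (tuckerMap C G) = tuckerMap (fun k => B k * C k) G := by
  funext i
  simp only [tuckerMap, Matrix.mul_apply, Fintype.prod_sum, Finset.mul_sum, Finset.sum_mul,
    Finset.prod_mul_distrib, mul_assoc]
  exact Finset.sum_comm

lemma tuckerMap_add {I r : Fin N → ℕ} (P Q : ∀ k, Matrix (Fin (I k)) (Fin (r k)) ℝ)
    (X : (∀ k, Fin (r k)) → ℝ) :
    tuckerMap (fun k => P k + Q k) X =
      ∑ t : Finset (Fin N), tuckerMap (fun k => if k ∈ t then Q k else P k) X := by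
  funext i
  simp only [tuckerMap, Finset.sum_apply, Matrix.add_apply, prod_add_eq_sum_prod_ite,
    Finset.sum_mul]
  rw [Finset.sum_comm]
  refine Finset.sum_congr rfl fun t _ => Finset.sum_congr rfl fun j _ => ?_
  congr 2 with k
  split_ifs <;> rfl

lemma sum_pi_fin_succ {I : Fin (N + 1) → ℕ} (g : (∀ k, Fin (I k)) → ℝ) :
    ∑ i, g i = ∑ i₀, ∑ i', g (Fin.cons i₀ i') := by
  rw [← (Fin.consEquiv fun k => Fin (I k)).sum_comp g, Fintype.sum_prod_type]
  rfl

lemma tuckerMap_cons {I r : Fin (N + 1) → ℕ}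
    (M : ∀ k, Matrix (Fin (I k)) (Fin (r k)) ℝ) (X : (∀ k, Fin (r k)) → ℝ)
    (i₀ : Fin (I 0)) (i : ∀ k : Fin N, Fin (I k.succ)) :
    tuckerMap M X (Fin.cons i₀ i) =
      (M 0 *ᵥ fun j₀ => tuckerMap (fun k => M k.succ) (fun j => X (Fin.cons j₀ j)) i) i₀ := by
  simp only [tuckerMap, sum_pi_fin_succ (I := r), Fin.prod_univ_succ, Fin.cons_zero,
    Fin.cons_succ, Matrix.mulVec, dotProduct, Finset.mul_sum, mul_assoc]

lemma sum_sq_tuckerMap_le {I r : Fin N → ℕ}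
    (M : ∀ k, Matrix (Fin (I k)) (Fin (r k)) ℝ) (X : (∀ k, Fin (r k)) → ℝ) :
    ∑ i, tuckerMap M X i ^ 2 ≤ (∏ k, ‖M k‖ ^ 2) * ∑ j, X j ^ 2 := by
  induction N with
  | zero => simp [tuckerMap]
  | succ N ih =>
    set Y : Fin (r 0) → (∀ k : Fin N, Fin (I k.succ)) → ℝ :=
      fun j₀ => tuckerMap (fun k => M k.succ) (fun j => X (Fin.cons j₀ j))
    calc ∑ i, tuckerMap M X i ^ 2
        = ∑ i, ∑ i₀, (M 0 *ᵥ fun j₀ => Y j₀ i) i₀ ^ 2 := by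
          rw [sum_pi_fin_succ, Finset.sum_comm]
          simp only [tuckerMap_cons, Y]
      _ ≤ ∑ i, ‖M 0‖ ^ 2 * ∑ j₀, Y j₀ i ^ 2 :=
          Finset.sum_le_sum fun i _ => sum_sq_mulVec_le (M 0) _
      _ = ‖M 0‖ ^ 2 * ∑ j₀, ∑ i, Y j₀ i ^ 2 := by rw [← Finset.mul_sum, Finset.sum_comm]
      _ ≤ ‖M 0‖ ^ 2 * ∑ j₀, (∏ k : Fin N, ‖M k.succ‖ ^ 2) * ∑ j, X (Fin.cons j₀ j) ^ 2 := by
          gcongr with j₀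
          exact ih _ _
      _ = (∏ k, ‖M k‖ ^ 2) * ∑ j, X j ^ 2 := by
          rw [Fin.prod_univ_succ, sum_pi_fin_succ (fun j => X j ^ 2), ← Finset.mul_sum]
          ring

lemma norm_tuckerMap_le {I r : Fin N → ℕ}
    (M : ∀ k, Matrix (Fin (I k)) (Fin (r k)) ℝ) (X : (∀ k, Fin (r k)) → ℝ) :
    ‖WithLp.toLp 2 (tuckerMap M X)‖ ≤ (∏ k, ‖M k‖) * ‖WithLp.toLp 2 X‖ := by
  rw [norm_toLp_eq_sqrt_sum_sq, norm_toLp_eq_sqrt_sum_sq,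
    ← Real.sqrt_sq (Finset.prod_nonneg fun k _ => norm_nonneg (M k)), ← Real.sqrt_mul',
    ← Finset.prod_pow]
  · exact Real.sqrt_le_sqrt (sum_sq_tuckerMap_le M X)
  · positivity

open Finset in
lemma norm_tuckerMap_add_sub_le {I r : Fin N → ℕ}
    (P Q : ∀ k, Matrix (Fin (I k)) (Fin (r k)) ℝ) (X : (∀ k, Fin (r k)) → ℝ) {s : ℝ}
    (hP : ∀ k, ‖P k‖ ≤ 1) (hQ : ∀ k, ‖Q k‖ ≤ s) :
    ‖WithLp.toLp 2 (tuckerMap (fun k => P k + Q k) X - tuckerMap P X)‖ ≤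
      ((1 + s) ^ N - 1) * ‖WithLp.toLp 2 X‖ := by
  set term := fun t : Finset (Fin N) => tuckerMap (fun k => if k ∈ t then Q k else P k) X
  set S : Finset (Finset (Fin N)) := univ.erase ∅ with hS
  have hdiff : tuckerMap (fun k => P k + Q k) X - tuckerMap P X = ∑ t ∈ S, term t := by
    rw [hS, sum_erase_eq_sub (mem_univ _), tuckerMap_add]
    simp [term]
  have hterm (t : Finset (Fin N)) : ‖WithLp.toLp 2 (term t)‖ ≤ s ^ #t * ‖WithLp.toLp 2 X‖ := by
    refine (norm_tuckerMap_le _ X).trans (mul_le_mul_of_nonneg_right ?_ (norm_nonneg _))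
    calc ∏ k, ‖if k ∈ t then Q k else P k‖ ≤ ∏ k, if k ∈ t then s else 1 := by
          refine prod_le_prod (fun k _ => norm_nonneg _) fun k _ => ?_
          split_ifs
          exacts [hQ k, hP k]
      _ = s ^ #t := by rw [Fintype.prod_ite_mem, prod_const]
  have hbinom : ∑ t ∈ S, s ^ #t = (1 + s) ^ N - 1 := by
    rw [hS, sum_erase_eq_sub (mem_univ _)]
    simpa [add_comm] using Fin.sum_pow_mul_eq_add_pow s 1
  calc ‖WithLp.toLp 2 (tuckerMap (fun k => P k + Q k) X - tuckerMap P X)‖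
      = ‖∑ t ∈ S, WithLp.toLp 2 (term t)‖ := by rw [hdiff, WithLp.toLp_sum]
    _ ≤ ∑ t ∈ S, ‖WithLp.toLp 2 (term t)‖ := norm_sum_le _ _
    _ ≤ ∑ t ∈ S, s ^ #t * ‖WithLp.toLp 2 X‖ := sum_le_sum fun t _ => hterm t
    _ = ((1 + s) ^ N - 1) * ‖WithLp.toLp 2 X‖ := by rw [← sum_mul, hbinom]

end Tucker

theorem tucker_residual_upper_general {N : ℕ} (hN : 0 < N) (I r : Fin N → ℕ)
    (A B : ∀ k, Matrix (Fin (I k)) (Fin (r k)) ℝ)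
    (hA : ∀ k, (A k)ᵀ * A k = 1)
    (G : (∀ k, Fin (r k)) → ℝ) (T : (∀ k, Fin (I k)) → ℝ)
    (hT : T = tuckerMap A G)
    (Xopt : (∀ k, Fin (r k)) → ℝ)
    (hXopt : Xopt = tuckerMap (fun k => (B k)ᵀ * A k) G)
    (s : ℝ)
    (hs : haveI : Nonempty (Fin N) := Fin.pos_iff_nonempty.mp hN
      s = ⨆ k, specNorm (B k * (B k)ᵀ - A k * (A k)ᵀ)) :
    Real.sqrt (∑ i, (tuckerMap B Xopt i - T i) ^ 2) ≤
      Real.sqrt (∑ i, T i ^ 2) * ((1 + s) ^ N - 1) := by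
  set P := fun k => A k * (A k)ᵀ
  set E := fun k => B k * (B k)ᵀ - A k * (A k)ᵀ
  have hE (k : Fin N) : ‖E k‖ ≤ s := by
    rw [← specNorm_eq_l2_opNorm, hs]
    exact le_ciSup (Set.finite_range fun k => specNorm (E k)).bddAbove k
  have hPT : tuckerMap P T = T := by
    rw [hT, tuckerMap_tuckerMap]
    simp only [P, Matrix.mul_assoc, hA, Matrix.mul_one]
  have hBT : tuckerMap B Xopt = tuckerMap (fun k => P k + E k) T := by
    rw [hXopt, hT, tuckerMap_tuckerMap, tuckerMap_tuckerMap]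
    simp only [P, E, add_sub_cancel, Matrix.mul_assoc]
  have hresidual : (fun i => tuckerMap B Xopt i - T i) =
      tuckerMap (fun k => P k + E k) T - tuckerMap P T := by
    rw [hBT, hPT]
    rfl
  rw [← norm_toLp_eq_sqrt_sum_sq, ← norm_toLp_eq_sqrt_sum_sq, hresidual, mul_comm]
  exact norm_tuckerMap_add_sub_le P E T (fun k => norm_mul_transpose_le_one (hA k)) hE

/-- Let `T = G ×₁ A⁽¹⁾ ⋯ ×_N A⁽ᴺ⁾`, let each `B⁽ⁿ⁾` have orthonormal columns, and let
`X_opt = G ×₁ (B⁽¹⁾)ᵀA⁽¹⁾ ⋯`.  With `sin θ = max_n ‖sin Θ(B⁽ⁿ⁾, A⁽ⁿ⁾)‖ = max_n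
‖B⁽ⁿ⁾(B⁽ⁿ⁾)ᵀ − A⁽ⁿ⁾(A⁽ⁿ⁾)ᵀ‖₂` and `φ = ‖X_opt ×₁ B⁽¹⁾ ⋯ − T‖_F`, one has
`φ ≤ ‖T‖_F·[(1 + sin θ)^N − 1]`. -/
theorem tucker_residual_upper {N : ℕ} (hN : 0 < N) (I r : Fin N → ℕ)
    (A B : ∀ k, Matrix (Fin (I k)) (Fin (r k)) ℝ)
    (hA : ∀ k, (A k)ᵀ * A k = 1) (hB : ∀ k, (B k)ᵀ * B k = 1)
    (G : (∀ k, Fin (r k)) → ℝ) (T : (∀ k, Fin (I k)) → ℝ)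
    (hT : T = tuckerMap A G)
    (Xopt : (∀ k, Fin (r k)) → ℝ)
    (hXopt : Xopt = tuckerMap (fun k => (B k)ᵀ * A k) G)
    (s : ℝ)
    (hs : haveI : Nonempty (Fin N) := Fin.pos_iff_nonempty.mp hN
      s = ⨆ k, specNorm (B k * (B k)ᵀ - A k * (A k)ᵀ)) :
    Real.sqrt (∑ i, (tuckerMap B Xopt i - T i) ^ 2) ≤
      Real.sqrt (∑ i, T i ^ 2) * ((1 + s) ^ N - 1) :=
  tucker_residual_upper_general hN I r A B hA G T hT Xopt hXopt s hs
end
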